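/- arXiv:2304.09681 — 3 statements merged into one kernel-verified Lean document; each statement's English description precedes it below -/
import Mathlib

section
/- Let p, q be coprime positive integers with p \geq 2, let t = p/q and let \ell = -2 + t. Then the quotient ring \mathbb{C}[x]/\langle \prod_{r=0}^{p-2}\prod_{s=0}^{q-1}(x + \ell/2 - r + s t) \rangle is isomorphic as a \mathbb{C}-algebra to the product ring \mathbb{C}^{(p-1)q}; in particular it is a semisimple commutative algebra of dimension (p-1)q. -/
/-!
The roots `r - s t - ℓ/2` of the polynomial are pairwise distinct: an equality
`r - s p/q = r' - s' p/q` gives `q (r - r') = p (s - s')`, so coprimality forces `p ∣ r - r'`,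
hence `r = r'` as `r, r' < p`, and then `s = s'`. For distinct roots the factors `X - C c` are
pairwise coprime, and the Chinese remainder theorem splits the quotient into copies of
`ℂ[X]/(X - c) ≃ ℂ`, one for each of the `(p - 1) q` roots.
-/

open Polynomial

namespace Polynomial

variable {K ι : Type*} [Field K] [Fintype ι]

noncomputable def quotientSpanProdXSubCAlgEquiv {c : ι → K} (hc : Function.Injective c) :
    (K[X] ⧸ Ideal.span {∏ i, (X - C (c i))}) ≃ₐ[K] (ι → K) :=
  (Ideal.quotientEquivAlgOfEq K
      (Ideal.iInf_span_singleton fun _ _ hij => pairwise_coprime_X_sub_C hc hij).symm).trans <|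
    (AlgEquiv.ofRingEquiv (f := Ideal.quotientInfRingEquivPiQuotient _ fun _ _ hij =>
        (Ideal.isCoprime_span_singleton_iff _ _).2 (pairwise_coprime_X_sub_C hc hij))
      fun _ => rfl).trans <|
    AlgEquiv.piCongrRight fun i => quotientSpanXSubCAlgEquiv (c i)

end Polynomial

theorem Nat.Coprime.eq_of_mul_add_mul_eq {p q r r' s s' : ℕ} (hpq : p.Coprime q)
    (hr : r < p) (hr' : r' < p) (h : q * r + p * s' = q * r' + p * s) : r = r' ∧ s = s' := by
  have hmod : q * r ≡ q * r' [MOD p] := by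
    simpa [Nat.ModEq, Nat.add_mul_mod_self_left] using congrArg (· % p) h
  have hrr : r = r' := (hmod.cancel_left_of_coprime hpq).eq_of_lt_of_lt hr hr'
  subst hrr
  exact ⟨rfl, Nat.eq_of_mul_eq_mul_left (by omega : 0 < p) (by omega : p * s = p * s')⟩

theorem injective_natCast_sub_mul_div_of_coprime (K : Type*) [Field K] [CharZero K] {p q : ℕ}
    (hpq : p.Coprime q) :
    Function.Injective fun i : Fin p × Fin q => (i.1 : K) - i.2 * (p / q) := by
  rintro ⟨r, s⟩ ⟨r', s'⟩ h
  have hq : (q : K) ≠ 0 := Nat.cast_ne_zero.2 s.pos.ne'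
  have hnat : q * r + p * s' = q * r' + p * s := by
    have : (q * r + p * s' : K) = q * r' + p * s := by
      field_simp at h
      linear_combination h
    exact_mod_cast this
  obtain ⟨hrr, hss⟩ := hpq.eq_of_mul_add_mul_eq r.2 r'.2 hnat
  exact Prod.ext (Fin.ext hrr) (Fin.ext hss)

theorem twisted_zhu_semisimple_general (p q : ℕ)
    (hco : Nat.Coprime p q) :
    Nonempty
      ((Polynomial ℂ ⧸ Ideal.span
          {∏ r ∈ Finset.range (p - 1), ∏ s ∈ Finset.range q,
            (X + C (((-2 : ℂ) + (p : ℂ) / (q : ℂ)) / 2 - (r : ℂ) + (s : ℂ) * ((p : ℂ) / (q : ℂ))))})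
        ≃ₐ[ℂ] (Fin ((p - 1) * q) → ℂ)) := by
  set t : ℂ := (p : ℂ) / (q : ℂ)
  set ℓ : ℂ := -2 + t
  let root : Fin (p - 1) × Fin q → ℂ := fun i => (i.1 : ℂ) - i.2 * t - ℓ / 2
  have hroot : Function.Injective root :=
    sub_left_injective.comp <| (injective_natCast_sub_mul_div_of_coprime ℂ hco).comp <|
      (Fin.castLE_injective (Nat.sub_le p 1)).prodMap Function.injective_id
  have hprod : ∏ r ∈ Finset.range (p - 1), ∏ s ∈ Finset.range q,
      (X + C (ℓ / 2 - (r : ℂ) + (s : ℂ) * t)) = ∏ i, (X - C (root i)) := by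
    simp only [Finset.prod_range, Fintype.prod_prod_type, root]
    refine Finset.prod_congr rfl fun r _ => Finset.prod_congr rfl fun s _ => ?_
    rw [← sub_neg_eq_add, ← map_neg]
    congr 2
    ring
  exact ⟨(Ideal.quotientEquivAlgOfEq ℂ (congrArg (fun f => Ideal.span {f}) hprod)).trans <|
    (quotientSpanProdXSubCAlgEquiv hroot).trans <|
      AlgEquiv.piCongrLeft ℂ (fun _ => ℂ) finProdFinEquiv⟩

/-- For coprime positive integers `p, q` with `p ≥ 2`, `t = p/q` and `ℓ = -2 + t`, the
twisted Zhu algebra `ℂ[x]/⟨∏_{r=0}^{p-2} ∏_{s=0}^{q-1} (x + ℓ/2 - r + s t)⟩` is isomorphic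
as a `ℂ`-algebra to `ℂ^{(p-1)q}`. -/
theorem twisted_zhu_semisimple (p q : ℕ) (hp : 2 ≤ p) (hq : 0 < q)
    (hco : Nat.Coprime p q) :
    Nonempty
      ((Polynomial ℂ ⧸ Ideal.span
          {∏ r ∈ Finset.range (p - 1), ∏ s ∈ Finset.range q,
            (X + C (((-2 : ℂ) + (p : ℂ) / (q : ℂ)) / 2 - (r : ℂ) + (s : ℂ) * ((p : ℂ) / (q : ℂ))))})
        ≃ₐ[ℂ] (Fin ((p - 1) * q) → ℂ)) :=
  twisted_zhu_semisimple_general p q hco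
end

section
/- Let A be an associative unital \mathbb{C}-algebra with elements T_+, T_-, T_0 satisfying T_0 T_+ - T_+ T_0 = -2T_+, T_0 T_- - T_- T_0 = 2T_-, T_+ T_- - T_- T_+ = T_0, and set G_\alpha = T_- T_+ - \alpha T_0 + \alpha(\alpha+1). Then for every positive integer m: T_-^m T_+^m = G_0 G_1 \cdots G_{m-1} and T_+^m T_-^m = G_{-1} G_{-2} \cdots G_{-m}. -/
/-!
Commuting `G_α` past `T₊` shifts its parameter by `+1`, and past `T₋` by `-1`; both follow from
the three commutation relations by expanding. Since `T₋T₊ = G₀` and `T₊T₋ = G₋₁`, peeling one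
factor off each power gives `T₋ᵐ⁺¹T₊ᵐ⁺¹ = T₋ᵐ G₀ T₊ᵐ = T₋ᵐT₊ᵐ Gₘ`, and likewise
`T₊ᵐ⁺¹T₋ᵐ⁺¹ = T₊ᵐT₋ᵐ G₋₁₋ₘ`, so both products follow by induction on `m`.
-/

/-- The shifted Casimir-type element `G_α = T₋T₊ - αT₀ + α(α+1)·1`. -/
noncomputable def Gcas {A : Type*} [Ring A] [Algebra ℂ A]
    (Tm Tp T0 : A) (α : ℂ) : A :=
  Tm * Tp - α • T0 + (α * (α + 1)) • (1 : A)

section Shift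

variable {M R : Type*} [Monoid M] [AddMonoid R] {a : M} {g : R → M} {c : R}

theorem mul_pow_eq_pow_mul_of_shift (hg : ∀ α, g α * a = a * g (α + c)) (α : R) (n : ℕ) :
    g α * a ^ n = a ^ n * g (α + n • c) := by
  induction n generalizing α with
  | zero => simp
  | succ n ih =>
    rw [pow_succ', ← mul_assoc, hg, mul_assoc, ih, ← mul_assoc, ← pow_succ', succ_nsmul',
      add_assoc]

theorem pow_mul_pow_eq_prod_of_shift {b : M} {α₀ : R} (hba : b * a = g α₀)
    (hg : ∀ α, g α * a = a * g (α + c)) (m : ℕ) :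
    b ^ m * a ^ m = ((List.range m).map fun i => g (α₀ + i • c)).prod := by
  induction m with
  | zero => simp
  | succ m ih =>
    calc b ^ (m + 1) * a ^ (m + 1) = b ^ m * (g α₀ * a ^ m) := by
          rw [← hba, pow_succ, pow_succ']
          simp only [mul_assoc]
      _ = b ^ m * a ^ m * g (α₀ + m • c) := by
          rw [mul_pow_eq_pow_mul_of_shift hg, mul_assoc]
      _ = _ := by
          rw [ih, List.range_succ, List.map_append, List.prod_append]
          simp

end Shift

section Casimir

variable {A : Type*} [Ring A] [Algebra ℂ A] {Tp Tm T0 : A}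

theorem Gcas_mul_Tp (h1 : T0 * Tp - Tp * T0 = (-2 : ℂ) • Tp) (h3 : Tp * Tm - Tm * Tp = T0)
    (α : ℂ) : Gcas Tm Tp T0 α * Tp = Tp * Gcas Tm Tp T0 (α + 1) := by
  rw [← sub_eq_zero]
  calc Gcas Tm Tp T0 α * Tp - Tp * Gcas Tm Tp T0 (α + 1)
        = (T0 - (Tp * Tm - Tm * Tp)) * Tp - (α + 1) • (T0 * Tp - Tp * T0 - (-2 : ℂ) • Tp) := by
          simp only [Gcas, sub_mul, mul_sub, add_mul, mul_add, smul_mul_assoc, mul_smul_comm,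
            one_mul, mul_one, mul_assoc]
          module
    _ = 0 := by
          rw [h1, h3]
          simp

theorem Gcas_mul_Tm (h2 : T0 * Tm - Tm * T0 = (2 : ℂ) • Tm) (h3 : Tp * Tm - Tm * Tp = T0)
    (α : ℂ) : Gcas Tm Tp T0 α * Tm = Tm * Gcas Tm Tp T0 (α + -1) := by
  rw [← sub_eq_zero]
  calc Gcas Tm Tp T0 α * Tm - Tm * Gcas Tm Tp T0 (α + -1)
        = Tm * (Tp * Tm - Tm * Tp - T0) - α • (T0 * Tm - Tm * T0 - (2 : ℂ) • Tm) := by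
          simp only [Gcas, sub_mul, mul_sub, add_mul, mul_add, smul_mul_assoc, mul_smul_comm,
            one_mul, mul_one, mul_assoc]
          module
    _ = 0 := by
          rw [h2, h3]
          simp

end Casimir

theorem Gcas_prod_general (A : Type*) [Ring A] [Algebra ℂ A] (Tp Tm T0 : A)
    (h1 : T0 * Tp - Tp * T0 = (-2 : ℂ) • Tp)
    (h2 : T0 * Tm - Tm * T0 = (2 : ℂ) • Tm)
    (h3 : Tp * Tm - Tm * Tp = T0) (m : ℕ) :
    Tm ^ m * Tp ^ m = ((List.range m).map (fun i => Gcas Tm Tp T0 (i : ℂ))).prod ∧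
    Tp ^ m * Tm ^ m = ((List.range m).map (fun i => Gcas Tm Tp T0 (-((i : ℂ) + 1)))).prod := by
  have G_zero : Tm * Tp = Gcas Tm Tp T0 0 := by simp [Gcas]
  have G_neg_one : Tp * Tm = Gcas Tm Tp T0 (-1) := by simp [Gcas, ← h3]
  -- In the statement `List.range m` is coerced to a `List ℂ`, i.e. a `flatMap` of `Nat.cast`.
  refine ⟨?_, ?_⟩
  · rw [pow_mul_pow_eq_prod_of_shift G_zero (Gcas_mul_Tp h1 h3) m]
    simp [← List.map_eq_flatMap, Function.comp_def]
  · rw [pow_mul_pow_eq_prod_of_shift G_neg_one (Gcas_mul_Tm h2 h3) m]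
    simp [← List.map_eq_flatMap, Function.comp_def]

/-- If `T₀T₊ - T₊T₀ = -2T₊`, `T₀T₋ - T₋T₀ = 2T₋`, `T₊T₋ - T₋T₊ = T₀`, then for every
positive integer `m`: `T₋ᵐ T₊ᵐ = G₀G₁⋯G_{m-1}` and `T₊ᵐ T₋ᵐ = G₋₁G₋₂⋯G₋ₘ`. -/
theorem Gcas_prod (A : Type*) [Ring A] [Algebra ℂ A] (Tp Tm T0 : A)
    (h1 : T0 * Tp - Tp * T0 = (-2 : ℂ) • Tp)
    (h2 : T0 * Tm - Tm * T0 = (2 : ℂ) • Tm)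
    (h3 : Tp * Tm - Tm * Tp = T0) (m : ℕ) (hm : 0 < m) :
    Tm ^ m * Tp ^ m = ((List.range m).map (fun i => Gcas Tm Tp T0 (i : ℂ))).prod ∧
    Tp ^ m * Tm ^ m = ((List.range m).map (fun i => Gcas Tm Tp T0 (-((i : ℂ) + 1)))).prod :=
  Gcas_prod_general A Tp Tm T0 h1 h2 h3 m
end

section
/- Let L = sl_2 \otimes \mathbb{C}[t,t^{-1}] be the loop Lie algebra of sl_2 (with bracket [x\otimes t^m, y\otimes t^n] = [x,y]\otimes t^{m+n}), let N_- be the Lie subalgebra \mathbb{C}(e\otimes 1) + t^{-1}\mathbb{C}[t^{-1}]\otimes sl_2, and let B_0 = \mathbb{C}((t^{-1}+1)\otimes e) + (t^{-2}+t^{-1})\mathbb{C}[t^{-1}]\otimes sl_2. Then B_0 is a Lie ideal of N_-, and in the quotient Lie algebra L_0 = N_- /B_0 the classes T_+ = e\otimes 1 + B_0, T_- = f\otimes t^{-1} + B_0, T_0 = h\otimes t^{-1} + B_0 satisfy [T_0, T_+] = -2T_+, [T_0, T_-] = 2T_-, [T_+, T_-] = T_0. -/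
open TensorProduct LaurentPolynomial Submodule

/-! Both `N₋` and `B₀` are spans and the bracket is bilinear, so every claim is checked on
generators, where `⁅p ⊗ x, q ⊗ y⁆ = pq ⊗ ⁅x, y⁆`. The ideal property then comes down to
`[e, e] = 0` and to `t⁻ⁿ⁻¹(t⁻¹ + 1)` and `t⁻ⁿ⁻¹(t⁻ᵐ⁻² + t⁻ᵐ⁻¹)` being again of the form
`t⁻ᵏ⁻² + t⁻ᵏ⁻¹`; the three relations are `[h, e] = 2e`, `[h, f] = -2f`, `[e, f] = h`
tensored with the appropriate powers of `t`. -/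

theorem LieAlgebra.lie_mem_of_mem_span {R L : Type*} [CommRing R] [LieRing L] [LieAlgebra R L]
    (P : Submodule R L) {S S' : Set L} (h : ∀ x ∈ S, ∀ y ∈ S', ⁅x, y⁆ ∈ P) {x y : L}
    (hx : x ∈ span R S) (hy : y ∈ span R S') : ⁅x, y⁆ ∈ P :=
  LinearMap.BilinMap.apply_apply_mem_of_mem_span P S S'
    (LieModule.toEnd R L L : L →ₗ[R] Module.End R L) h x y hx hy

namespace LoopAlgebra

variable {R : Type*} [CommRing R] {L : Type*} [LieRing L] [LieAlgebra R L]

/-- Spans `N₋ = R(e ⊗ 1) + t⁻¹R[t⁻¹] ⊗ L`. -/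
def negativePartGenerators (e : L) : Set (R[T;T⁻¹] ⊗[R] L) :=
  {1 ⊗ₜ[R] e} ∪ {p | ∃ (m : ℕ) (x : L), p = T (-(m : ℤ) - 1) ⊗ₜ[R] x}

/-- Spans `B₀ = R((t⁻¹ + 1) ⊗ e) + (t⁻² + t⁻¹)R[t⁻¹] ⊗ L`. -/
def idealGenerators (e : L) : Set (R[T;T⁻¹] ⊗[R] L) :=
  {(T (-1) + 1) ⊗ₜ[R] e} ∪
    {p | ∃ (m : ℕ) (x : L), p = (T (-(m : ℤ) - 2) + T (-(m : ℤ) - 1)) ⊗ₜ[R] x}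

theorem tmul_mem_span_idealGenerators {e : L} (m : ℕ) (x : L) :
    (T (-(m : ℤ) - 2) + T (-(m : ℤ) - 1) : R[T;T⁻¹]) ⊗ₜ[R] x ∈ span R (idealGenerators e) :=
  subset_span (Or.inr ⟨m, x, rfl⟩)

theorem tmul_mem_span_negativePartGenerators {e : L} (m : ℕ) (x : L) :
    (T (-(m : ℤ) - 1) : R[T;T⁻¹]) ⊗ₜ[R] x ∈ span R (negativePartGenerators e) :=
  subset_span (Or.inr ⟨m, x, rfl⟩)

theorem span_idealGenerators_le (e : L) :
    span R (idealGenerators e) ≤ span R (negativePartGenerators (R := R) e) := by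
  refine span_le.mpr ?_
  rintro p (rfl | ⟨m, x, rfl⟩) <;> rw [add_tmul]
  · exact add_mem (tmul_mem_span_negativePartGenerators 0 e) (subset_span (Or.inl rfl))
  · have hT : (-(m : ℤ) - 2) = -((m + 1 : ℕ) : ℤ) - 1 := by push_cast; ring
    rw [hT]
    exact add_mem (tmul_mem_span_negativePartGenerators _ x)
      (tmul_mem_span_negativePartGenerators m x)

theorem lie_mem_span_idealGenerators {e : L} {x y : R[T;T⁻¹] ⊗[R] L}
    (hx : x ∈ negativePartGenerators e) (hy : y ∈ idealGenerators e) :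
    ⁅x, y⁆ ∈ span R (idealGenerators e) := by
  rcases hx with rfl | ⟨n, a, rfl⟩ <;> rcases hy with rfl | ⟨m, b, rfl⟩ <;>
    rw [LieAlgebra.ExtendScalars.bracket_tmul]
  · rw [lie_self, tmul_zero]
    exact zero_mem _
  · rw [one_mul]
    exact tmul_mem_span_idealGenerators m _
  · have hT : (T (-(n : ℤ) - 1) * (T (-1) + 1) : R[T;T⁻¹]) =
        T (-(n : ℤ) - 2) + T (-(n : ℤ) - 1) := by
      rw [mul_add, mul_one, ← T_add]
      congr 2
      ring
    rw [hT]
    exact tmul_mem_span_idealGenerators n _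
  · have hT : (T (-(n : ℤ) - 1) * (T (-(m : ℤ) - 2) + T (-(m : ℤ) - 1)) : R[T;T⁻¹]) =
        T (-((n + m + 1 : ℕ) : ℤ) - 2) + T (-((n + m + 1 : ℕ) : ℤ) - 1) := by
      rw [mul_add, ← T_add, ← T_add]
      congr 2 <;> push_cast <;> ring
    rw [hT]
    exact tmul_mem_span_idealGenerators _ _

variable {e f h : L}

theorem lie_h_e_add_two_smul_mem_span (he : ⁅h, e⁆ = (2 : R) • e) :
    ⁅(T (-1) : R[T;T⁻¹]) ⊗ₜ[R] h, (1 : R[T;T⁻¹]) ⊗ₜ[R] e⁆ + (2 : R) • ((1 : R[T;T⁻¹]) ⊗ₜ[R] e) ∈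
      span R (idealGenerators e) := by
  rw [LieAlgebra.ExtendScalars.bracket_tmul, mul_one, he, tmul_smul, ← smul_add, ← add_tmul]
  exact smul_mem _ _ (subset_span (Or.inl rfl))

theorem lie_h_f_sub_two_smul_mem_span (hf : ⁅h, f⁆ = (-2 : R) • f) :
    ⁅(T (-1) : R[T;T⁻¹]) ⊗ₜ[R] h, (T (-1) : R[T;T⁻¹]) ⊗ₜ[R] f⁆
        - (2 : R) • ((T (-1) : R[T;T⁻¹]) ⊗ₜ[R] f) ∈ span R (idealGenerators e) := by
  have hT : (T (-1) * T (-1) : R[T;T⁻¹]) = T (-((0 : ℕ) : ℤ) - 2) := by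
    rw [← T_add]
    norm_num
  rw [LieAlgebra.ExtendScalars.bracket_tmul, hT, hf, tmul_smul, neg_smul, ← neg_add', ← smul_add,
    ← add_tmul]
  exact neg_mem (smul_mem _ _ (tmul_mem_span_idealGenerators 0 f))

theorem lie_e_f_sub_h_mem_span (hef : ⁅e, f⁆ = h) :
    ⁅(1 : R[T;T⁻¹]) ⊗ₜ[R] e, (T (-1) : R[T;T⁻¹]) ⊗ₜ[R] f⁆ - (T (-1) : R[T;T⁻¹]) ⊗ₜ[R] h ∈
      span R (idealGenerators e) := by
  rw [LieAlgebra.ExtendScalars.bracket_tmul, one_mul, hef, sub_self]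
  exact zero_mem _

end LoopAlgebra

/-- In the loop Lie algebra `sl₂ ⊗ ℂ[t,t⁻¹]`, the subspace
`B₀ = ℂ((t⁻¹+1)⊗e) + (t⁻²+t⁻¹)ℂ[t⁻¹] ⊗ sl₂` is a Lie ideal of the subalgebra
`N₋ = ℂ(e⊗1) + t⁻¹ℂ[t⁻¹] ⊗ sl₂`, and in the quotient `L₀ = N₋/B₀` the classes
`T₊ = e⊗1`, `T₋ = f⊗t⁻¹`, `T₀ = h⊗t⁻¹` satisfy
`[T₀,T₊] = -2T₊`, `[T₀,T₋] = 2T₋`, `[T₊,T₋] = T₀`. -/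
theorem loop_algebra_quotient_sl2 (L : Type*) [LieRing L] [LieAlgebra ℂ L] (e f h : L)
    (he : ⁅h, e⁆ = (2 : ℂ) • e) (hf : ⁅h, f⁆ = (-2 : ℂ) • f) (hef : ⁅e, f⁆ = h)
    (Nneg B0 : Submodule ℂ (LaurentPolynomial ℂ ⊗[ℂ] L))
    (hN : Nneg = Submodule.span ℂ
      ({(1 : LaurentPolynomial ℂ) ⊗ₜ[ℂ] e} ∪
        {p | ∃ (m : ℕ) (x : L), p = (T (-(m : ℤ) - 1)) ⊗ₜ[ℂ] x}))
    (hB : B0 = Submodule.span ℂ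
      ({((T (-1) + 1 : LaurentPolynomial ℂ)) ⊗ₜ[ℂ] e} ∪
        {p | ∃ (m : ℕ) (x : L),
          p = ((T (-(m : ℤ) - 2) + T (-(m : ℤ) - 1) : LaurentPolynomial ℂ)) ⊗ₜ[ℂ] x})) :
    B0 ≤ Nneg ∧
    (∀ x ∈ Nneg, ∀ y ∈ B0, ⁅x, y⁆ ∈ B0) ∧
    ⁅(T (-1) : LaurentPolynomial ℂ) ⊗ₜ[ℂ] h, (1 : LaurentPolynomial ℂ) ⊗ₜ[ℂ] e⁆
        + (2 : ℂ) • ((1 : LaurentPolynomial ℂ) ⊗ₜ[ℂ] e) ∈ B0 ∧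
    ⁅(T (-1) : LaurentPolynomial ℂ) ⊗ₜ[ℂ] h, (T (-1) : LaurentPolynomial ℂ) ⊗ₜ[ℂ] f⁆
        - (2 : ℂ) • ((T (-1) : LaurentPolynomial ℂ) ⊗ₜ[ℂ] f) ∈ B0 ∧
    ⁅(1 : LaurentPolynomial ℂ) ⊗ₜ[ℂ] e, (T (-1) : LaurentPolynomial ℂ) ⊗ₜ[ℂ] f⁆
        - (T (-1) : LaurentPolynomial ℂ) ⊗ₜ[ℂ] h ∈ B0 := by
  subst hN hB
  exact ⟨LoopAlgebra.span_idealGenerators_le e,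
    fun x hx y hy => LieAlgebra.lie_mem_of_mem_span _
      (fun _ hx' _ hy' => LoopAlgebra.lie_mem_span_idealGenerators hx' hy') hx hy,
    LoopAlgebra.lie_h_e_add_two_smul_mem_span he, LoopAlgebra.lie_h_f_sub_two_smul_mem_span hf,
    LoopAlgebra.lie_e_f_sub_h_mem_span hef⟩
end
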